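/- arXiv:q-alg/9710007 — 3 statements merged into one kernel-verified Lean document; each statement's English description precedes it below -/
import Mathlib

section
/- Let Λ ∈ P_l^+, p ∈ 𝒫(Λ) and λ = λ(p). For k ≥ 1 and r ∈ ℤ/nℤ, let ψ_r(k) be the number of length-k rows of λ whose right end has colour r, and let σ : P_0 → P_0 be the linear map with σ(Λ_i) = Λ_{i−1}. Then for all k ≥ 1, η_{k−1} − σ(η_k) = ∑_{r} ψ_r(k)α′_r, where η_k = p_{k+1} − p_k. Moreover at least one of the integers ψ_r(k), r ∈ ℤ/nℤ, equals 0, and consequently (ψ_r(k))_{r} is the unique family of nonnegative integers with at least one zero entry satisfying this equation. -/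
open scoped BigOperators

namespace BF

/-- The fundamental weight `Λ_i`, viewed as the indicator function `ZMod n → ℤ` of `i`. -/
def Lam (n : ℕ) (i : ZMod n) : ZMod n → ℤ := fun j => if j = i then 1 else 0

/-- A weight is dominant if all its coefficients are nonnegative. -/
def Dominant (n : ℕ) (a : ZMod n → ℤ) : Prop := ∀ i, 0 ≤ a i

/-- The step weight of `e : ZMod n → ℕ`: its `Λ_j`-coefficient is `e (j-1) - e j`. -/
def stepWt (n : ℕ) (e : ZMod n → ℕ) : ZMod n → ℤ := fun j => (e (j - 1) : ℤ) - (e j : ℤ)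

/-- Membership in `A_l^+`: `d` is the step weight of some `e : ZMod n → ℕ` of total sum `l`. -/
def InA (n : ℕ) [NeZero n] (l : ℕ) (d : ZMod n → ℤ) : Prop :=
  ∃ e : ZMod n → ℕ, (∑ i, e i) = l ∧ d = stepWt n e

/-- The ground-state path of the weight `Λ`: `p̄_k (i) = Λ (i - k)`,
which is the coefficient form of `p̄_k = Λ_{v₀+k} + ⋯ + Λ_{v_{l-1}+k}`. -/
def gsp (n : ℕ) (Λ : ZMod n → ℤ) (k : ℕ) : ZMod n → ℤ := fun i => Λ (i - (k : ZMod n))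

/-- `p` is a `Λ`-path of level `l`. -/
def IsPath (n : ℕ) [NeZero n] (l : ℕ) (Λ : ZMod n → ℤ) (p : ℕ → ZMod n → ℤ) : Prop :=
  (∀ k, InA n l (fun i => p (k + 1) i - p k i)) ∧ ∃ K, ∀ k ≥ K, p k = gsp n Λ k

/-- The length of a `Λ`-path: least `K` with `p k = p̄ k` for all `k ≥ K`. -/
noncomputable def pathLen (n : ℕ) (Λ : ZMod n → ℤ) (p : ℕ → ZMod n → ℤ) : ℕ :=
  sInf {K | ∀ k ≥ K, p k = gsp n Λ k}

/-- `f : ℕ → ℕ` is a partition (rows are indexed from `0`). -/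
def IsPartitionF (f : ℕ → ℕ) : Prop := (∀ i, f (i + 1) ≤ f i) ∧ ∃ N, ∀ i ≥ N, f i = 0

/-- An `l`-multipartition. -/
def IsMP (l : ℕ) (lam : Fin l → ℕ → ℕ) : Prop := ∀ j, IsPartitionF (lam j)

/-- The data `v : Fin l → ℕ` of a decomposition `Λ = Λ_{v 0} + ⋯ + Λ_{v (l-1)}`
with `0 ≤ v 0 ≤ ⋯ ≤ v (l-1) < n`. -/
def SortedV (n l : ℕ) (v : Fin l → ℕ) : Prop := Monotone v ∧ ∀ j, v j < n

/-- The weight `Λ = Λ_{v 0} + ⋯ + Λ_{v (l-1)}` determined by `v`. -/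
def wtOf (n : ℕ) {l : ℕ} (v : Fin l → ℕ) : ZMod n → ℤ :=
  fun i => ((Finset.univ.filter fun j : Fin l => ((v j : ZMod n) = i)).card : ℤ)

/-- The colour of the node in (0-based) row `i`, (1-based) column `c` of component `j`:
`(c - (i+1) + v j) mod n`. -/
def colour (n : ℕ) {l : ℕ} (v : Fin l → ℕ) (j : Fin l) (i c : ℕ) : ZMod n :=
  (c : ZMod n) - (i : ZMod n) - 1 + (v j : ZMod n)

/-- `N^r(λ)`: the total number of nodes of colour `r` in the multipartition `λ`. -/
noncomputable def Ncolour (n : ℕ) {l : ℕ} (v : Fin l → ℕ) (lam : Fin l → ℕ → ℕ)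
    (r : ZMod n) : ℕ :=
  Nat.card {x : Fin l × ℕ × ℕ //
    1 ≤ x.2.2 ∧ x.2.2 ≤ lam x.1 x.2.1 ∧ colour n v x.1 x.2.1 x.2.2 = r}

/-- The height `f′_m` of the `m`-th column of the partition `f`. -/
noncomputable def colHt (f : ℕ → ℕ) (m : ℕ) : ℕ := Nat.card {i : ℕ // m ≤ f i}

/-- The function `e` whose step weight is the `k`-th step of `π(λ)`:
`e i = #{j : v j + k - λ^{(j)′}_{k+1} ≡ i mod n}`. -/
noncomputable def eFun (n : ℕ) {l : ℕ} (v : Fin l → ℕ) (lam : Fin l → ℕ → ℕ) (k : ℕ) :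
    ZMod n → ℕ :=
  fun i => Nat.card {j : Fin l //
    (v j : ZMod n) + (k : ZMod n) - (colHt (lam j) (k + 1) : ZMod n) = i}

/-- `p = π(λ)` where `λ` is an `l`-multipartition of highest weight `wtOf n v`. -/
def IsPi (n : ℕ) {l : ℕ} (v : Fin l → ℕ) (lam : Fin l → ℕ → ℕ)
    (p : ℕ → ZMod n → ℤ) : Prop :=
  (∀ k, (fun i => p (k + 1) i - p k i) = stepWt n (eFun n v lam k)) ∧
  ∃ K, ∀ k ≥ K, p k = gsp n (wtOf n v) k

/-- `λ` is cylindrical of highest weight `Λ = wtOf n v`. -/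
def Cylindrical (n : ℕ) {l : ℕ} (v : Fin l → ℕ) (lam : Fin l → ℕ → ℕ) : Prop :=
  (∀ (j : ℕ) (hj : j + 1 < l) (i : ℕ),
      lam ⟨j + 1, hj⟩ (i + (v ⟨j + 1, hj⟩ - v ⟨j, Nat.lt_of_succ_lt hj⟩)) ≤
        lam ⟨j, Nat.lt_of_succ_lt hj⟩ i) ∧
  ∀ (hl : 0 < l) (i : ℕ),
      lam ⟨0, hl⟩ (i + (n + v ⟨0, hl⟩ - v ⟨l - 1, Nat.sub_lt hl Nat.one_pos⟩)) ≤
        lam ⟨l - 1, Nat.sub_lt hl Nat.one_pos⟩ i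

/-- `λ` is higher than `μ`: every column of each component of `λ` is at most as high as
the corresponding column of `μ`. -/
def Higher {l : ℕ} (lam mu : Fin l → ℕ → ℕ) : Prop :=
  ∀ (j : Fin l) (k : ℕ), 1 ≤ k → colHt (lam j) k ≤ colHt (mu j) k

/-- `λ` is the highest-lift of the path `p`: it is a cylindrical multipartition with
`π(λ) = p` which is higher than every cylindrical multipartition mapping to `p`. -/
def IsHL (n : ℕ) {l : ℕ} (v : Fin l → ℕ) (lam : Fin l → ℕ → ℕ)
    (p : ℕ → ZMod n → ℤ) : Prop :=
  IsMP l lam ∧ Cylindrical n v lam ∧ IsPi n v lam p ∧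
    ∀ mu : Fin l → ℕ → ℕ, IsMP l mu → Cylindrical n v mu → IsPi n v mu p → Higher lam mu

/-- `λ ∈ 𝒴(Λ)` with `Λ = wtOf n v`. -/
def InY (n : ℕ) {l : ℕ} (v : Fin l → ℕ) (lam : Fin l → ℕ → ℕ) : Prop :=
  ∃ p, IsHL n v lam p

/-- `α′_r = -Λ_{r-1} + 2Λ_r - Λ_{r+1}`. -/
def alphaP (n : ℕ) (r : ZMod n) : ZMod n → ℤ :=
  fun i => -(Lam n (r - 1) i) + 2 * Lam n r i - Lam n (r + 1) i

/-- `ψ_r(k)`: the number of length-`k` rows of `λ` whose right end has colour `r`. -/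
noncomputable def psiCount (n : ℕ) {l : ℕ} (v : Fin l → ℕ) (lam : Fin l → ℕ → ℕ)
    (k : ℕ) (r : ZMod n) : ℕ :=
  Nat.card {x : Fin l × ℕ // lam x.1 x.2 = k ∧ colour n v x.1 x.2 k = r}

/-- The number of length-`k` rows of `λ` whose left end has colour `r`. -/
noncomputable def leftCount (n : ℕ) {l : ℕ} (v : Fin l → ℕ) (lam : Fin l → ℕ → ℕ)
    (k : ℕ) (r : ZMod n) : ℕ :=
  Nat.card {x : Fin l × ℕ // lam x.1 x.2 = k ∧ colour n v x.1 x.2 1 = r}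

/-- The total number of length-`k` rows of `λ`. -/
noncomputable def rowCount {l : ℕ} (lam : Fin l → ℕ → ℕ) (k : ℕ) : ℕ :=
  Nat.card {x : Fin l × ℕ // lam x.1 x.2 = k}

/-- `m_r(k)`: the number of `r`-nodes of `λ` in column `k` or to its right. -/
noncomputable def mCount (n : ℕ) {l : ℕ} (v : Fin l → ℕ) (lam : Fin l → ℕ → ℕ)
    (k : ℕ) (r : ZMod n) : ℕ :=
  Nat.card {x : Fin l × ℕ × ℕ //
    k ≤ x.2.2 ∧ x.2.2 ≤ lam x.1 x.2.1 ∧ colour n v x.1 x.2.1 x.2.2 = r}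

/-- `p` is a `(Λ′,Λ″)`-restricted path, where `l''` is the level of `Λ″`:
`p - Λ′ ∈ 𝒫(Λ″)` and `p_k - η̂_k` is dominant for all `k`. -/
def IsRes (n : ℕ) [NeZero n] (l'' : ℕ) (L' L'' : ZMod n → ℤ) (p : ℕ → ZMod n → ℤ) : Prop :=
  IsPath n l'' L'' (fun k i => p k i - L' i) ∧
  ∀ k, ∃ e : ZMod n → ℕ, (∑ i, e i) = l'' ∧
    (fun i => p (k + 1) i - p k i) = stepWt n e ∧ ∀ i, (e i : ℤ) ≤ p k i

/-- The length of a restricted path: `ℓ(p) = ℓ(p - Λ′)`. -/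
noncomputable def resLen (n : ℕ) (L' L'' : ZMod n → ℤ) (p : ℕ → ZMod n → ℤ) : ℕ :=
  sInf {K | ∀ k ≥ K, (fun i => p k i - L' i) = gsp n L'' k}

/-- `♯Λ`. -/
def sharpWt (n : ℕ) (Λ : ZMod n → ℤ) : ZMod n → ℤ := fun i => Λ (-i)

/-- `♯p`: `(♯p)_k (i) = a_{k-i}(k)` where `p_k = ∑ a_i(k) Λ_i`. -/
def sharpPath (n : ℕ) (p : ℕ → ZMod n → ℤ) : ℕ → ZMod n → ℤ :=
  fun k i => p k ((k : ZMod n) - i)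

/-- `θ(a) = 1` if `a ≥ 0`, `0` otherwise. -/
def theta (a : ℤ) : ℕ := if 0 ≤ a then 1 else 0

/-- The function counting the entries of `μ : Fin l → ℕ` in each class mod `n`. -/
def cntF (n : ℕ) {l : ℕ} (μ : Fin l → ℕ) : ZMod n → ℕ :=
  fun i => (Finset.univ.filter fun j : Fin l => ((μ j : ZMod n) = i)).card

/-- The energy function `H` on `A_l^+ × A_l^+`:
`H(α,β) = min_{σ ∈ S_l} ∑_j θ(μ_j - ν_{σ(j)})` where `α`, `β` are the step weights of
`Λ_{μ_0} + ⋯ + Λ_{μ_{l-1}}`, `Λ_{ν_0} + ⋯ + Λ_{ν_{l-1}}` with `0 ≤ μ_j, ν_j < n`. -/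
noncomputable def Hfun (n : ℕ) (l : ℕ) (d d' : ZMod n → ℤ) : ℕ :=
  sInf {m | ∃ μ ν : Fin l → ℕ, (∀ j, μ j < n) ∧ (∀ j, ν j < n) ∧
    d = stepWt n (cntF n μ) ∧ d' = stepWt n (cntF n ν) ∧
    m = Finset.univ.inf' ⟨1, Finset.mem_univ 1⟩
      fun σ : Equiv.Perm (Fin l) => ∑ j, theta ((μ j : ℤ) - (ν (σ j) : ℤ))}

/-- `(j, i)` is a removable `r`-node of `λ` (node at the right end of 0-based row `i`
of component `j`). -/
def RemNode (n : ℕ) {l : ℕ} (v : Fin l → ℕ) (lam : Fin l → ℕ → ℕ) (r : ZMod n)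
    (j : Fin l) (i : ℕ) : Prop :=
  1 ≤ lam j i ∧ lam j (i + 1) < lam j i ∧ colour n v j i (lam j i) = r

/-- `(j, i)` is an addable `r`-node of `λ` (node addable at the end of 0-based row `i`
of component `j`). -/
def AddNode (n : ℕ) {l : ℕ} (v : Fin l → ℕ) (lam : Fin l → ℕ → ℕ) (r : ZMod n)
    (j : Fin l) (i : ℕ) : Prop :=
  (i = 0 ∨ lam j i < lam j (i - 1)) ∧ colour n v j i (lam j i + 1) = r

/-- The diagonal number `d = c - (i+1) + v j` of the addable/removable node
`x = (j, i, isRemovable)`. -/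
def nodeD {l : ℕ} (v : Fin l → ℕ) (lam : Fin l → ℕ → ℕ) (x : Fin l × ℕ × Bool) : ℤ :=
  (if x.2.2 then (lam x.1 x.2.1 : ℤ) else (lam x.1 x.2.1 : ℤ) + 1) - ((x.2.1 : ℤ) + 1) + (v x.1 : ℤ)

/-- The total order on addable/removable nodes: `(d,j) < (d',j')` iff `d < d'`, or
`d = d'` and `j > j'`. -/
def nodeLT {l : ℕ} (v : Fin l → ℕ) (lam : Fin l → ℕ → ℕ) (x y : Fin l × ℕ × Bool) : Prop :=
  nodeD v lam x < nodeD v lam y ∨ (nodeD v lam x = nodeD v lam y ∧ (y.1 : ℕ) < (x.1 : ℕ))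

/-- `L` is the `r`-signature of `λ`: the increasing list of all addable and removable
`r`-nodes (flag `true` = removable, `false` = addable). -/
def IsSig (n : ℕ) {l : ℕ} (v : Fin l → ℕ) (lam : Fin l → ℕ → ℕ) (r : ZMod n)
    (L : List (Fin l × ℕ × Bool)) : Prop :=
  L.Pairwise (nodeLT v lam) ∧
  ∀ x : Fin l × ℕ × Bool, x ∈ L ↔
    ((x.2.2 = true ∧ RemNode n v lam r x.1 x.2.1) ∨
      (x.2.2 = false ∧ AddNode n v lam r x.1 x.2.1))

/-- One step of the reduction procedure on signature words: delete an adjacent pair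
consisting of a removable node (`true`) immediately followed by an addable node (`false`). -/
inductive SigStep : List Bool → List Bool → Prop
  | pair (l₁ l₂ : List Bool) : SigStep (l₁ ++ true :: false :: l₂) (l₁ ++ l₂)





lemma natCard_eq_filter {α : Type*} (S : Finset α) (P : α → Prop) [DecidablePred P]
    (h : ∀ a, P a → a ∈ S) : Nat.card {x // P x} = (S.filter P).card := by
  have e : {x // P x} ≃ {x // x ∈ S.filter P} :=
    Equiv.subtypeEquivRight (by intro x; simp only [Finset.mem_filter]; tauto)
  rw [Nat.card_congr e, Nat.card_eq_fintype_card, Fintype.card_coe]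

lemma partAnti {f : ℕ → ℕ} (hf : IsPartitionF f) : Antitone f :=
  antitone_nat_of_succ_le hf.1

lemma key {f : ℕ → ℕ} (hf : IsPartitionF f) {m : ℕ} (hm : 1 ≤ m) (i : ℕ) :
    m ≤ f i ↔ i < colHt f m := by
  obtain ⟨N, hN⟩ := hf.2
  have hex : ∃ i, f i < m := ⟨N, by rw [hN N le_rfl]; omega⟩
  set t := Nat.find hex with ht
  have h1 : ∀ i < t, m ≤ f i := fun i hi => by
    have := Nat.find_min hex hi; omega
  have h2 : ∀ i, t ≤ i → f i < m := fun i hi =>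
    lt_of_le_of_lt (partAnti hf hi) (Nat.find_spec hex)
  have hset : ∀ i, m ≤ f i ↔ i < t := by
    intro i
    constructor
    · intro h; by_contra hc; exact absurd h (by have := h2 i (by omega); omega)
    · exact h1 i
  have : colHt f m = t := by
    rw [colHt, natCard_eq_filter (Finset.range t) _ (fun a ha => by
      simp only [Finset.mem_range]; exact (hset a).1 ha)]
    rw [Finset.filter_true_of_mem (fun a ha => (hset a).2 (Finset.mem_range.1 ha)),
      Finset.card_range]
  rw [this]; exact hset i

lemma colHt_anti {f : ℕ → ℕ} (hf : IsPartitionF f) {m m' : ℕ} (hm : 1 ≤ m) (h : m ≤ m') :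
    colHt f m' ≤ colHt f m := by
  by_contra hc
  push_neg at hc
  have h1 : colHt f m < colHt f m' := hc
  have := (key hf (by omega) (colHt f m)).2 h1
  have := (key hf hm (colHt f m)).1 (le_trans h this)
  omega

lemma colHt_eq_zero {f : ℕ → ℕ} (hf : IsPartitionF f) {m : ℕ} (h : f 0 < m) :
    colHt f m = 0 := by
  by_contra hc
  have h0 : 0 < colHt f m := Nat.pos_of_ne_zero hc
  have := (key hf (by omega) 0).2 h0
  omega

/-- conjugation: columns of the conjugate recover `g`. -/
lemma conj {g : ℕ → ℕ} (hg : IsPartitionF g) :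
    IsPartitionF (fun i => colHt g (i + 1)) ∧
    ∀ m, 1 ≤ m → colHt (fun i => colHt g (i + 1)) m = g (m - 1) := by
  have hF : IsPartitionF (fun i => colHt g (i + 1)) := by
    constructor
    · intro i; exact colHt_anti hg (by omega) (by omega)
    · exact ⟨g 0, fun i hi => colHt_eq_zero hg (by omega)⟩
  refine ⟨hF, fun m hm => ?_⟩
  have hiff : ∀ i, m ≤ colHt g (i + 1) ↔ i < g (m - 1) := by
    intro i
    have hk := key hg (show 1 ≤ i + 1 by omega) (m - 1)
    constructor
    · intro h
      exact hk.mpr (by omega)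
    · intro h
      have := hk.mp h
      omega
  have : colHt (fun i => colHt g (i + 1)) m = g (m - 1) := by
    rw [colHt, natCard_eq_filter (Finset.range (g (m-1))) _ (fun a ha => by
      simp only [Finset.mem_range]; exact (hiff a).1 ha)]
    rw [Finset.filter_true_of_mem (fun a ha => (hiff a).2 (Finset.mem_range.1 ha)),
      Finset.card_range]
  exact this

/-- column form from row form of cylindric inequality -/
lemma rowToCol {f f' : ℕ → ℕ} (hf : IsPartitionF f) (hf' : IsPartitionF f') (s : ℕ)
    (h : ∀ i, f' (i + s) ≤ f i) {c : ℕ} (hc : 1 ≤ c) :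
    colHt f' c ≤ colHt f c + s := by
  by_contra hcon
  push_neg at hcon
  have h1 : colHt f c + s < colHt f' c := hcon
  have h2 := (key hf' hc (colHt f c + s)).2 h1
  have h3 := h (colHt f c)
  have h4 : c ≤ f (colHt f c) := le_trans h2 h3
  have := (key hf hc (colHt f c)).1 h4
  omega

lemma colToRow {f f' : ℕ → ℕ} (hf : IsPartitionF f) (hf' : IsPartitionF f') (s : ℕ)
    (h : ∀ c, 1 ≤ c → colHt f' c ≤ colHt f c + s) (i : ℕ) :
    f' (i + s) ≤ f i := by
  by_contra hcon
  push_neg at hcon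
  have hc : 1 ≤ f i + 1 := by omega
  have h1 : f i + 1 ≤ f' (i + s) := hcon
  have h2 := (key hf' hc (i + s)).1 h1
  have h3 := h (f i + 1) hc
  have h4 : i < colHt f (f i + 1) := by omega
  have := (key hf hc i).2 h4
  omega




lemma sum_alphaP (n : ℕ) [NeZero n] (f : ZMod n → ℤ) (i : ZMod n) :
    ∑ r : ZMod n, f r * alphaP n r i = 2 * f i - f (i + 1) - f (i - 1) := by
  have e1 : ∀ r : ZMod n, (i = r - 1) ↔ (r = i + 1) := by
    intro r; constructor <;> intro h <;> linear_combination -h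
  have e2 : ∀ r : ZMod n, (i = r) ↔ (r = i) := fun r => eq_comm
  have e3 : ∀ r : ZMod n, (i = r + 1) ↔ (r = i - 1) := by
    intro r; constructor <;> intro h <;> linear_combination -h
  have h1 : ∀ r : ZMod n, f r * alphaP n r i =
      -(f r * (if r = i + 1 then 1 else 0)) + 2 * (f r * (if r = i then 1 else 0))
        - f r * (if r = i - 1 then 1 else 0) := by
    intro r
    simp only [alphaP, Lam, e1 r, e2 r, e3 r]
    ring
  rw [Finset.sum_congr rfl (fun r _ => h1 r)]
  rw [Finset.sum_sub_distrib, Finset.sum_add_distrib, Finset.sum_neg_distrib,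
    ← Finset.mul_sum]
  simp only [mul_ite, mul_one, mul_zero, Finset.sum_ite_eq', Finset.mem_univ, if_true]
  ring

/-- the per-component counting identity -/
lemma perComp (n : ℕ) [NeZero n] (k : ℕ) (V : ZMod n) (B : ℕ) (d : ℕ)
    (i : ZMod n) :
    (if (V + k - 1 - (B + d : ℕ) = i - 1) then (1:ℤ) else 0)
      - (if (V + k - 1 - (B + d : ℕ) = i) then 1 else 0)
      - (if (V + k - (B : ℕ) = i) then 1 else 0)
      + (if (V + k - (B : ℕ) = i + 1) then 1 else 0)
    = 2 * (∑ t ∈ Finset.Ico B (B + d), if ((k : ZMod n) - t - 1 + V = i) then (1:ℤ) else 0)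
      - (∑ t ∈ Finset.Ico B (B + d), if ((k : ZMod n) - t - 1 + V = i + 1) then (1:ℤ) else 0)
      - (∑ t ∈ Finset.Ico B (B + d), if ((k : ZMod n) - t - 1 + V = i - 1) then (1:ℤ) else 0) := by
  induction d with
  | zero =>
    simp only [Nat.add_zero, Finset.Ico_self, Finset.sum_empty]
    have e1 : (V + (k:ZMod n) - 1 - (B:ZMod n) = i - 1) ↔ (V + (k:ZMod n) - (B:ZMod n) = i) := by
      constructor <;> intro h <;> linear_combination h
    have e2 : (V + (k:ZMod n) - 1 - (B:ZMod n) = i) ↔ (V + (k:ZMod n) - (B:ZMod n) = i + 1) := by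
      constructor <;> intro h <;> linear_combination h
    simp only [e1, e2]; ring
  | succ d ih =>
    have hsplit : ∀ x : ZMod n,
        (∑ t ∈ Finset.Ico B (B + (d+1)), if ((k : ZMod n) - t - 1 + V = x) then (1:ℤ) else 0)
        = (∑ t ∈ Finset.Ico B (B + d), if ((k : ZMod n) - t - 1 + V = x) then (1:ℤ) else 0)
          + (if ((k : ZMod n) - (B + d : ℕ) - 1 + V = x) then (1:ℤ) else 0) := by
      intro x
      have : B + (d + 1) = (B + d) + 1 := by omega
      rw [this, Finset.sum_Ico_succ_top (by omega)]
    rw [hsplit, hsplit, hsplit]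
    have hc : ((B + (d+1) : ℕ) : ZMod n) = ((B + d : ℕ) : ZMod n) + 1 := by push_cast; ring
    have i1 : (V + (k:ZMod n) - 1 - ((B + (d+1) : ℕ) : ZMod n) = i - 1) ↔
        (V + (k:ZMod n) - 1 - ((B + d : ℕ) : ZMod n) = i) := by
      rw [hc]; constructor <;> intro h <;> linear_combination h
    have i2 : (V + (k:ZMod n) - 1 - ((B + (d+1) : ℕ) : ZMod n) = i) ↔
        (V + (k:ZMod n) - 1 - ((B + d : ℕ) : ZMod n) = i + 1) := by
      rw [hc]; constructor <;> intro h <;> linear_combination h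
    have t1 : ∀ x : ZMod n, ((k:ZMod n) - ((B + d : ℕ) : ZMod n) - 1 + V = x) ↔
        (V + (k:ZMod n) - 1 - ((B + d : ℕ) : ZMod n) = x) := by
      intro x; constructor <;> intro h <;> linear_combination h
    simp only [i1, i2, t1]
    linear_combination ih



lemma psi_expand (n : ℕ) [NeZero n] {l : ℕ} (v : Fin l → ℕ) (lam : Fin l → ℕ → ℕ)
    (hMP : IsMP l lam) (k : ℕ) (hk : 1 ≤ k) (r : ZMod n) :
    (psiCount n v lam k r : ℤ) =
      ∑ j : Fin l, ∑ t ∈ Finset.Ico (colHt (lam j) (k+1)) (colHt (lam j) k),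
        (if colour n v j t k = r then (1:ℤ) else 0) := by
  classical
  set M := Finset.univ.sup (fun j : Fin l => colHt (lam j) k) with hM
  have hbound : ∀ x : Fin l × ℕ, (lam x.1 x.2 = k ∧ colour n v x.1 x.2 k = r) →
      x ∈ Finset.univ ×ˢ Finset.range M := by
    intro x hx
    refine Finset.mem_product.mpr ⟨Finset.mem_univ _, Finset.mem_range.mpr ?_⟩
    have h1 : k ≤ lam x.1 x.2 := le_of_eq hx.1.symm
    have h2 := (key (hMP x.1) hk x.2).mp h1
    exact lt_of_lt_of_le h2 (Finset.le_sup (f := fun j => colHt (lam j) k) (Finset.mem_univ x.1))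
  rw [psiCount, natCard_eq_filter _ _ hbound]
  rw [Finset.natCast_card_filter]
  rw [Finset.sum_product]
  apply Finset.sum_congr rfl
  intro j _
  have hmem : ∀ t, (lam j t = k) ↔ t ∈ Finset.Ico (colHt (lam j) (k+1)) (colHt (lam j) k) := by
    intro t
    rw [Finset.mem_Ico]
    constructor
    · intro h
      constructor
      · by_contra hc
        push_neg at hc
        have := (key (hMP j) (by omega : 1 ≤ k+1) t).mpr hc
        omega
      · exact (key (hMP j) hk t).mp (le_of_eq h.symm)
    · rintro ⟨h1, h2⟩
      have ha := (key (hMP j) hk t).mpr h2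
      have hb : ¬ (k + 1 ≤ lam j t) := by
        intro hc
        have := (key (hMP j) (by omega : 1 ≤ k+1) t).mp hc
        omega
      omega
  have hsub : Finset.Ico (colHt (lam j) (k+1)) (colHt (lam j) k) ⊆ Finset.range M := by
    intro t ht
    rw [Finset.mem_Ico] at ht
    exact Finset.mem_range.mpr (lt_of_lt_of_le ht.2 (Finset.le_sup (f := fun j => colHt (lam j) k) (Finset.mem_univ j)))
  have step1 : ∀ t ∈ Finset.range M,
      (if (lam j t = k ∧ colour n v j t k = r) then (1:ℤ) else 0)
      = (if t ∈ Finset.Ico (colHt (lam j) (k+1)) (colHt (lam j) k) then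
          (if colour n v j t k = r then (1:ℤ) else 0) else 0) := by
    intro t _
    by_cases h1 : lam j t = k <;> by_cases h2 : colour n v j t k = r <;>
      simp [h1, h2, (hmem t).symm, -Finset.mem_Ico] <;> tauto
  rw [Finset.sum_congr rfl step1, Finset.sum_ite_mem,
    Finset.inter_eq_right.mpr hsub]

lemma eFun_expand (n : ℕ) [NeZero n] {l : ℕ} (v : Fin l → ℕ) (lam : Fin l → ℕ → ℕ)
    (m : ℕ) (x : ZMod n) :
    (eFun n v lam m x : ℤ) =
      ∑ j : Fin l, (if ((v j : ZMod n) + (m : ZMod n) - (colHt (lam j) (m+1) : ZMod n) = x)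
        then (1:ℤ) else 0) := by
  classical
  rw [eFun, natCard_eq_filter Finset.univ _ (fun a _ => Finset.mem_univ a),
    Finset.natCast_card_filter]

lemma partA (n : ℕ) [NeZero n] {l : ℕ} (v : Fin l → ℕ) (lam : Fin l → ℕ → ℕ)
    (hMP : IsMP l lam) (k : ℕ) (hk : 1 ≤ k) (i : ZMod n) :
    stepWt n (eFun n v lam (k-1)) i - stepWt n (eFun n v lam k) (i+1)
      = ∑ r : ZMod n, (psiCount n v lam k r : ℤ) * alphaP n r i := by
  classical
  rw [sum_alphaP n (fun r => (psiCount n v lam k r : ℤ)) i]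
  rw [psi_expand n v lam hMP k hk, psi_expand n v lam hMP k hk,
    psi_expand n v lam hMP k hk]
  simp only [stepWt]
  rw [eFun_expand, eFun_expand, eFun_expand, eFun_expand]
  have hadd : ∀ j : Fin l, colHt (lam j) ((k-1)+1) = colHt (lam j) k := by
    intro j; congr 1; omega
  simp only [hadd]
  rw [← Finset.sum_sub_distrib, ← Finset.sum_sub_distrib, ← Finset.sum_sub_distrib,
    Finset.mul_sum, ← Finset.sum_sub_distrib, ← Finset.sum_sub_distrib]
  apply Finset.sum_congr rfl
  intro j _
  have hba : colHt (lam j) (k+1) ≤ colHt (lam j) k := colHt_anti (hMP j) hk (by omega)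
  obtain ⟨d, hd⟩ := Nat.le.dest hba
  rw [← hd]
  have hcast : ((k - 1 : ℕ) : ZMod n) = (k : ZMod n) - 1 := by
    have : ((k - 1 : ℕ) : ZMod n) = ((k:ℕ) : ZMod n) - ((1:ℕ) : ZMod n) :=
      Nat.cast_sub hk
    simpa using this
  have c1 : ∀ x : ZMod n,
      ((v j : ZMod n) + ((k-1 : ℕ) : ZMod n) - ((colHt (lam j) (k+1) + d : ℕ) : ZMod n) = x)
      ↔ ((v j : ZMod n) + (k : ZMod n) - 1 - ((colHt (lam j) (k+1) + d : ℕ) : ZMod n) = x) := by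
    intro x; rw [hcast]; constructor <;> intro h <;> linear_combination h
  simp only [c1, colour, add_sub_cancel_right]
  linear_combination (norm := ring_nf) perComp n k ((v j : ZMod n)) (colHt (lam j) (k+1)) d i


lemma zmod_reach (n : ℕ) [NeZero n] (P : ZMod n → Prop) (i0 : ZMod n) (h0 : P i0)
    (hs : ∀ i, P i → P (i + 1)) : ∀ i, P i := by
  have hm : ∀ m : ℕ, P (i0 + m) := by
    intro m
    induction m with
    | zero => simpa using h0
    | succ m ih =>
      have := hs _ ih
      have e : i0 + (m : ZMod n) + 1 = i0 + ((m+1 : ℕ) : ZMod n) := by push_cast; ring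
      rwa [e] at this
  intro i
  have := hm (i - i0).val
  rwa [ZMod.natCast_rightInverse (i - i0), add_sub_cancel] at this

lemma harmonic_const (n : ℕ) [NeZero n] (d : ZMod n → ℤ)
    (h : ∀ i, 2 * d i - d (i + 1) - d (i - 1) = 0) : ∀ i, d i = d 0 := by
  set t := d 1 - d 0 with ht
  have hstep : ∀ i : ZMod n, d (i + 1) - d i = t := by
    apply zmod_reach n (fun i => d (i + 1) - d i = t) 0
    · simp [ht]
    · intro i hi
      have h1 := h (i + 1)
      have e : i + 1 - 1 = i := by ring
      rw [e] at h1
      linarith [hi, h1]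
  have hlin : ∀ m : ℕ, d (m : ZMod n) = d 0 + m * t := by
    intro m
    induction m with
    | zero => simp
    | succ m ih =>
      have := hstep (m : ZMod n)
      push_cast
      push_cast at ih
      linarith [this, ih]
  have hn : d ((n : ℕ) : ZMod n) = d 0 := by
    norm_num [ZMod.natCast_self]
  have ht0 : t = 0 := by
    have := hlin n
    rw [hn] at this
    have hn0 : (n : ℤ) ≠ 0 := by exact_mod_cast (NeZero.ne n)
    have : (n : ℤ) * t = 0 := by linarith
    rcases mul_eq_zero.mp this with h' | h'
    · exact absurd h' hn0
    · exact h'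
  intro i
  have := hlin (i.val)
  rwa [ZMod.natCast_rightInverse i, ht0, mul_zero, add_zero] at this



lemma succ_mod_div (l j : ℕ) (hl : 0 < l) :
    (j % l + 1 < l → (j+1) % l = j % l + 1 ∧ (j+1) / l = j / l) ∧
    (j % l + 1 = l → (j+1) % l = 0 ∧ (j+1) / l = j / l + 1) := by
  have e : j + 1 = l * (j / l) + (j % l + 1) := by
    have := Nat.div_add_mod j l; omega
  constructor
  · intro hj
    constructor
    · rw [e, Nat.mul_add_mod, Nat.mod_eq_of_lt hj]
    · rw [e, Nat.mul_add_div hl, Nat.div_eq_of_lt hj]; omega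
  · intro hj
    have e2 : j + 1 = l * (j / l + 1) := by rw [e, hj]; ring
    constructor
    · rw [e2, Nat.mul_mod_right]
    · rw [e2, Nat.mul_div_cancel_left _ hl]

lemma partB (n : ℕ) [NeZero n] (hn : 2 ≤ n) {l : ℕ}
    (v : Fin l → ℕ) (hv : SortedV n l v) (lam : Fin l → ℕ → ℕ) (p : ℕ → ZMod n → ℤ)
    (hHL : IsHL n v lam p) (k : ℕ) (hk : 1 ≤ k) :
    ∃ r : ZMod n, psiCount n v lam k r = 0 := by
  classical
  obtain ⟨hMP, hCyl, hPi, hMax⟩ := hHL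
  rcases Nat.eq_zero_or_pos l with hl0 | hl
  · refine ⟨0, ?_⟩
    subst hl0
    have he : IsEmpty {x : Fin 0 × ℕ // lam x.1 x.2 = k ∧ colour n v x.1 x.2 k = 0} :=
      ⟨fun x => x.val.1.elim0⟩
    exact Nat.card_of_isEmpty
  by_contra hall
  push_neg at hall
  -- basic index functions
  set jm : ℕ → Fin l := fun j => ⟨j % l, Nat.mod_lt j hl⟩ with hjm
  set w : ℕ → ℤ := fun j => (v (jm j) : ℤ) + (n : ℤ) * ((j / l : ℕ) : ℤ) with hw
  set A : ℕ → ℤ := fun j => (colHt (lam (jm j)) k : ℤ) - w j with hA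
  set B : ℕ → ℤ := fun j => (colHt (lam (jm j)) (k+1) : ℤ) - w j with hB
  have hjml : ∀ j : Fin l, jm (j : ℕ) = j := by
    intro j; apply Fin.ext; simp [hjm, Nat.mod_eq_of_lt j.isLt]
  have hwl : ∀ j : Fin l, w (j : ℕ) = v j := by
    intro j
    have h0 : (j:ℕ) / l = 0 := Nat.div_eq_of_lt j.isLt
    simp only [hw, hjml j, h0, Nat.cast_ofNat, Nat.cast_zero, mul_zero, add_zero]
  -- column form of cylindricity, ℕ versions
  have hccol1 : ∀ (jj : ℕ) (hj : jj + 1 < l) (c : ℕ), 1 ≤ c →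
      colHt (lam ⟨jj+1, hj⟩) c ≤ colHt (lam ⟨jj, Nat.lt_of_succ_lt hj⟩) c +
        (v ⟨jj+1, hj⟩ - v ⟨jj, Nat.lt_of_succ_lt hj⟩) := by
    intro jj hj c hc
    exact rowToCol (hMP _) (hMP _) _ (hCyl.1 jj hj) hc
  have hccol2 : ∀ (c : ℕ), 1 ≤ c →
      colHt (lam ⟨0, hl⟩) c ≤ colHt (lam ⟨l-1, Nat.sub_lt hl Nat.one_pos⟩) c +
        (n + v ⟨0, hl⟩ - v ⟨l-1, Nat.sub_lt hl Nat.one_pos⟩) := by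
    intro c hc
    exact rowToCol (hMP _) (hMP _) _ (hCyl.2 hl) hc
  -- monotonicity of v and bounds
  have hvmono : ∀ (jj : ℕ) (hj : jj + 1 < l),
      v ⟨jj, Nat.lt_of_succ_lt hj⟩ ≤ v ⟨jj+1, hj⟩ := by
    intro jj hj
    exact hv.1 (by exact Fin.mk_le_mk.mpr (by omega))
  have hvlt : ∀ j : Fin l, v j < n := hv.2
  -- A, B antitone steps (ℤ cylindricity)
  have ccol : ∀ (c : ℕ), 1 ≤ c → ∀ j : ℕ,
      (colHt (lam (jm (j+1))) c : ℤ) - w (j+1) ≤ (colHt (lam (jm j)) c : ℤ) - w j := by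
    intro c hc j
    rcases Nat.lt_or_ge (j % l + 1) l with hcase | hcase
    · obtain ⟨h1, h2⟩ := (succ_mod_div l j hl).1 hcase
      have hjm1 : jm (j+1) = ⟨j % l + 1, hcase⟩ := by apply Fin.ext; simp [hjm, h1]
      have hjm0 : jm j = ⟨j % l, Nat.lt_of_succ_lt hcase⟩ := by apply Fin.ext; simp [hjm]
      have hcol := hccol1 (j % l) hcase c hc
      have hvm := hvmono (j % l) hcase
      zify [hvm] at hcol
      simp only [hw, hjm1, hjm0, h2]
      linarith
    · have hl2 : j % l + 1 = l := by have := Nat.mod_lt j hl; omega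
      obtain ⟨h1, h2⟩ := (succ_mod_div l j hl).2 hl2
      have hjm1 : jm (j+1) = ⟨0, hl⟩ := by apply Fin.ext; simp [hjm, h1]
      have hjm0 : jm j = ⟨l-1, Nat.sub_lt hl Nat.one_pos⟩ := by
        apply Fin.ext; simp [hjm]; omega
      have hcol := hccol2 c hc
      have hvl := hvlt ⟨l-1, Nat.sub_lt hl Nat.one_pos⟩
      have hle : v ⟨l-1, Nat.sub_lt hl Nat.one_pos⟩ ≤ n + v ⟨0, hl⟩ := by omega
      zify [hle] at hcol
      simp only [hw, hjm1, hjm0, h2]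
      push_cast
      linarith
  have hA_step : ∀ j, A (j+1) ≤ A j := fun j => ccol k hk j
  have hB_step : ∀ j, B (j+1) ≤ B j := fun j => ccol (k+1) (by omega) j
  have hA_anti : Antitone A := antitone_nat_of_succ_le hA_step
  have hB_anti : Antitone B := antitone_nat_of_succ_le hB_step
  have hBA : ∀ j, B j ≤ A j := by
    intro j
    have := colHt_anti (hMP (jm j)) hk (by omega : k ≤ k + 1)
    simp only [hA, hB]
    omega
  -- periodicity
  have hjmper : ∀ j : ℕ, jm (j + l) = jm j := by
    intro j; apply Fin.ext; simp [hjm, Nat.add_mod_right]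
  have hdivper : ∀ j : ℕ, (j + l) / l = j / l + 1 := fun j => Nat.add_div_right _ hl
  have hAper : ∀ j u : ℕ, A (j + u * l) = A j - u * n := by
    have hone : ∀ j : ℕ, A (j + l) = A j - n := by
      intro j
      simp only [hA, hw, hjmper j, hdivper j]
      push_cast
      ring
    intro j u
    induction u with
    | zero => simp
    | succ u ih =>
      have h3 : j + (u+1) * l = (j + u * l) + l := by ring
      rw [h3, hone, ih]
      push_cast
      ring
  have hBper : ∀ j u : ℕ, B (j + u * l) = B j - u * n := by
    have hone : ∀ j : ℕ, B (j + l) = B j - n := by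
      intro j
      simp only [hB, hw, hjmper j, hdivper j]
      push_cast
      ring
    intro j u
    induction u with
    | zero => simp
    | succ u ih =>
      have h3 : j + (u+1) * l = (j + u * l) + l := by ring
      rw [h3, hone, ih]
      push_cast
      ring
  -- THE COVERING ARGUMENT
  have hcov : ∀ j : ℕ, B j ≤ A (j + 1) := by
    intro j0
    by_contra hlt
    push_neg at hlt
    set x := A (j0 + 1) with hx
    set r : ZMod n := (((k : ℤ) - 1 - x : ℤ) : ZMod n) with hr
    obtain ⟨⟨⟨j1, t⟩, hlen, hcolr⟩⟩ :=
      (Nat.card_ne_zero.mp (hall r)).1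
    dsimp only at hlen hcolr
    have hb1 : colHt (lam j1) (k+1) ≤ t := by
      by_contra hc
      push_neg at hc
      have := (key (hMP j1) (by omega : 1 ≤ k+1) t).mpr hc
      omega
    have ha1 : t < colHt (lam j1) k :=
      (key (hMP j1) hk t).mp (le_of_eq hlen.symm)
    set z : ℤ := (t : ℤ) - (v j1 : ℤ) with hz
    have hzB : B (j1 : ℕ) ≤ z ∧ z < A (j1 : ℕ) := by
      constructor <;>
      · simp only [hB, hA, hjml j1, hwl j1]
        omega
    -- residues agree
    have hcast1 : (((k : ℤ) - 1 - z : ℤ) : ZMod n) = colour n v j1 t k := by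
      simp only [colour, hz]
      push_cast
      ring
    have h0 : (((x - z) : ℤ) : ZMod n) = 0 := by
      have e : (x - z : ℤ) = ((k : ℤ) - 1 - z) - ((k : ℤ) - 1 - x) := by ring
      rw [e, Int.cast_sub, hcast1, hcolr, hr, sub_self]
    obtain ⟨m, hm⟩ := (ZMod.intCast_zmod_eq_zero_iff_dvd _ _).mp h0
    -- shift everything up by T periods
    set T : ℤ := max m 0 with hT
    have hu1 : ((T - m).toNat : ℤ) = T - m := Int.toNat_of_nonneg (by omega)
    have hu0 : ((T.toNat : ℕ) : ℤ) = T := Int.toNat_of_nonneg (by omega)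
    set u1 := (T - m).toNat with hu1d
    set u0 := T.toNat with hu0d
    have key1 : B ((j1 : ℕ) + u1 * l) ≤ x - T * n := by
      rw [hBper, hu1]
      linarith [hzB.1, hm]
    have key2 : x - T * n < A ((j1 : ℕ) + u1 * l) := by
      rw [hAper, hu1]
      linarith [hzB.2, hm]
    have key3 : A ((j0 + 1) + u0 * l) = x - T * n := by
      rw [hAper, hu0]
    have key4 : x - T * n < B (j0 + u0 * l) := by
      rw [hBper, hu0]
      linarith [hlt]
    rcases le_or_gt ((j1 : ℕ) + u1 * l) (j0 + u0 * l) with hcase | hcase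
    · have := hB_anti hcase
      linarith
    · have hle : (j0 + 1) + u0 * l ≤ (j1 : ℕ) + u1 * l := by omega
      have := hA_anti hle
      linarith
  -- strict decrease somewhere in the first period
  have hstrict : ∃ j0, j0 < l ∧ A (j0 + 1) < A j0 := by
    by_contra hc
    push_neg at hc
    have hconst : ∀ j, j ≤ l → A 0 ≤ A j := by
      intro j
      induction j with
      | zero => intro _; exact le_refl _
      | succ j ih =>
        intro hj
        exact le_trans (ih (by omega)) (hc j (by omega))
    have h1 := hconst l le_rfl
    have h2 := hAper 0 1
    simp only [Nat.zero_add, one_mul, Nat.cast_one] at h2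
    have h3 : (2:ℤ) ≤ (n:ℤ) := by exact_mod_cast hn
    omega
  -- the smaller multipartition
  obtain ⟨j0, hj0l, hj0⟩ := hstrict
  set nh : Fin l → ℕ → ℕ := fun j c =>
    if c = k then (A ((j : ℕ) + 1) + (v j : ℤ)).toNat else colHt (lam j) c with hnh
  have hnh_ne : ∀ (j : Fin l) (c : ℕ), c ≠ k → nh j c = colHt (lam j) c := by
    intro j c hc; simp only [hnh, if_neg hc]
  have hnh_nonneg : ∀ j : Fin l, (colHt (lam j) (k+1) : ℤ) ≤ A ((j : ℕ) + 1) + (v j : ℤ) := by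
    intro j
    have h1 := hcov (j : ℕ)
    simp only [hB] at h1
    rw [hjml j, hwl j] at h1
    omega
  have hnh_k : ∀ j : Fin l, (nh j k : ℤ) = A ((j : ℕ) + 1) + (v j : ℤ) := by
    intro j
    simp only [hnh, if_pos rfl]
    exact Int.toNat_of_nonneg (le_trans (by positivity) (hnh_nonneg j))
  have hnh_le : ∀ j : Fin l, nh j k ≤ colHt (lam j) k := by
    intro j
    have h1 := hA_step (j : ℕ)
    have h2 : A ((j : ℕ)) = (colHt (lam j) k : ℤ) - (v j : ℤ) := by
      simp only [hA]; rw [hjml j, hwl j]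
    have h3 := hnh_k j
    omega
  have hnh_ge : ∀ j : Fin l, colHt (lam j) (k+1) ≤ nh j k := by
    intro j
    have h1 := hnh_nonneg j
    have h2 := hnh_k j
    omega
  have hnhPart : ∀ j : Fin l, IsPartitionF (fun c => nh j (c + 1)) := by
    intro j
    constructor
    · intro c
      show nh j (c + 1 + 1) ≤ nh j (c + 1)
      rcases eq_or_ne (c+1) k with h1 | h1
      · rw [hnh_ne j (c+1+1) (by omega), h1]
        exact hnh_ge j
      · rcases eq_or_ne (c+1+1) k with h2 | h2
        · rw [hnh_ne j (c+1) h1, h2]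
          refine le_trans (hnh_le j) ?_
          rw [← h2]
          exact colHt_anti (hMP j) (by omega) (by omega)
        · rw [hnh_ne j (c+1) h1, hnh_ne j (c+1+1) h2]
          exact colHt_anti (hMP j) (by omega) (by omega)
    · refine ⟨k + lam j 0 + 1, fun c hc => ?_⟩
      show nh j (c + 1) = 0
      rw [hnh_ne j (c+1) (by omega)]
      exact colHt_eq_zero (hMP j) (by omega)
  set mu : Fin l → ℕ → ℕ := fun j i => colHt (fun c => nh j (c + 1)) (i + 1) with hmu
  have hmuMP : IsMP l mu := fun j => (conj (hnhPart j)).1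
  have hmuCol : ∀ (j : Fin l) (c : ℕ), 1 ≤ c → colHt (mu j) c = nh j c := by
    intro j c hc
    have h1 := (conj (hnhPart j)).2 c hc
    rw [show c - 1 + 1 = c from by omega] at h1
    exact h1
  -- cylindricity of mu
  have hmuCyl : Cylindrical n v mu := by
    constructor
    · intro jj hj i
      apply colToRow (hmuMP _) (hmuMP _)
      intro c hc
      rw [hmuCol _ c hc, hmuCol _ c hc]
      rcases eq_or_ne c k with hck | hck
      · subst hck
        have h1 := hA_step (jj + 1)
        have h2 := hnh_k ⟨jj+1, hj⟩
        have h3 := hnh_k ⟨jj, Nat.lt_of_succ_lt hj⟩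
        have h4 := hvmono jj hj
        simp only [Fin.val_mk] at h2 h3
        omega
      · rw [hnh_ne _ c hck, hnh_ne _ c hck]
        exact hccol1 jj hj c hc
    · intro hl' i
      apply colToRow (hmuMP _) (hmuMP _)
      intro c hc
      rw [hmuCol _ c hc, hmuCol _ c hc]
      rcases eq_or_ne c k with hck | hck
      · subst hck
        have h1 := hA_step 0
        have h2 := hnh_k ⟨0, hl'⟩
        have h3 := hnh_k ⟨l-1, Nat.sub_lt hl' Nat.one_pos⟩
        simp only [Fin.val_mk] at h2 h3
        rw [show l - 1 + 1 = l from by omega] at h3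
        have hAl := hAper 0 1
        simp only [Nat.zero_add, one_mul, Nat.cast_one] at hAl
        have hvl := hvlt ⟨l-1, Nat.sub_lt hl' Nat.one_pos⟩
        have hvn : v ⟨l-1, Nat.sub_lt hl' Nat.one_pos⟩ < n := hvl
        omega
      · rw [hnh_ne _ c hck, hnh_ne _ c hck]
        exact hccol2 c hc
  -- mu maps to the same path
  have hrotinj : Function.Injective (fun j : Fin l => jm ((j : ℕ) + 1)) := by
    have hmodsucc : ∀ a : Fin l, ((a : ℕ) + 1) % l =
        if (a : ℕ) + 1 = l then 0 else (a : ℕ) + 1 := by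
      intro a
      rcases eq_or_ne ((a : ℕ) + 1) l with h | h
      · rw [if_pos h, h, Nat.mod_self]
      · rw [if_neg h, Nat.mod_eq_of_lt (by have := a.isLt; omega)]
    intro a b hab
    have h1 : ((a : ℕ) + 1) % l = ((b : ℕ) + 1) % l := by
      have := congrArg Fin.val hab
      simpa [hjm] using this
    rw [hmodsucc a, hmodsucc b] at h1
    apply Fin.ext
    have ha := a.isLt
    have hb := b.isLt
    split_ifs at h1 <;> omega
  have hrotbij : Function.Bijective (fun j : Fin l => jm ((j : ℕ) + 1)) :=
    (Finite.injective_iff_bijective).mp hrotinj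
  have hnh_cast : ∀ j : Fin l, ((nh j k : ℕ) : ZMod n) =
      (colHt (lam (jm ((j : ℕ) + 1))) k : ZMod n) - (v (jm ((j : ℕ) + 1)) : ZMod n)
        + (v j : ZMod n) := by
    intro j
    have h1 : (nh j k : ℤ) = (colHt (lam (jm ((j : ℕ) + 1))) k : ℤ)
        - ((v (jm ((j : ℕ) + 1)) : ℤ) + (n : ℤ) * ((((j : ℕ) + 1) / l : ℕ) : ℤ))
        + (v j : ℤ) := by
      rw [hnh_k j]
    calc ((nh j k : ℕ) : ZMod n) = (((nh j k : ℤ)) : ZMod n) := by push_cast; rfl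
    _ = _ := by
        rw [h1]
        push_cast
        rw [ZMod.natCast_self]
        ring
  have hmuPi : IsPi n v mu p := by
    refine ⟨?_, hPi.2⟩
    intro k'
    rw [hPi.1 k']
    rcases eq_or_ne k' (k - 1) with hk' | hk'
    · subst hk'
      have heq : eFun n v mu (k-1) = eFun n v lam (k-1) := by
        funext x
        show Nat.card _ = Nat.card _
        rw [natCard_eq_filter Finset.univ _ (fun a _ => Finset.mem_univ a),
          natCard_eq_filter Finset.univ _ (fun a _ => Finset.mem_univ a)]
        have hPP : ∀ j : Fin l,
            ((v j : ZMod n) + ((k-1 : ℕ) : ZMod n) - (colHt (mu j) ((k-1)+1) : ZMod n) = x)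
            ↔ ((v (jm ((j : ℕ) + 1)) : ZMod n) + ((k-1 : ℕ) : ZMod n)
                - (colHt (lam (jm ((j : ℕ) + 1))) ((k-1)+1) : ZMod n) = x) := by
          intro j
          rw [show (k-1)+1 = k from by omega]
          rw [hmuCol j k hk, hnh_cast j]
          constructor <;> intro h <;> linear_combination h
        apply Finset.card_equiv (Equiv.ofBijective _ hrotbij)
        intro j
        simp only [Finset.mem_filter, Finset.mem_univ, true_and, Equiv.ofBijective_apply]
        exact hPP j
      rw [heq]
    · have hne : k' + 1 ≠ k := by omega
      have hcc : ∀ j : Fin l, colHt (mu j) (k'+1) = colHt (lam j) (k'+1) := by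
        intro j
        rw [hmuCol j (k'+1) (by omega), hnh_ne j (k'+1) hne]
      have heq : eFun n v mu k' = eFun n v lam k' := by
        funext x
        simp only [eFun, hcc]
      rw [heq]
  -- contradiction with maximality
  have hH := hMax mu hmuMP hmuCyl hmuPi
  have hH1 := hH ⟨j0, hj0l⟩ k hk
  rw [hmuCol ⟨j0, hj0l⟩ k hk] at hH1
  have h2 := hnh_k ⟨j0, hj0l⟩
  have e1 : jm j0 = ⟨j0, hj0l⟩ := hjml ⟨j0, hj0l⟩
  have e2 : w j0 = (v ⟨j0, hj0l⟩ : ℤ) := hwl ⟨j0, hj0l⟩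
  have h3 : A j0 = (colHt (lam ⟨j0, hj0l⟩) k : ℤ) - (v ⟨j0, hj0l⟩ : ℤ) := by
    simp only [hA]
    rw [e1, e2]
  have hval : ((⟨j0, hj0l⟩ : Fin l) : ℕ) = j0 := rfl
  rw [hval] at h2
  omega

/-- `η_{k-1} - σ(η_k) = ∑_r ψ_r(k) α′_r`, at least one `ψ_r(k)` vanishes,
and `(ψ_r(k))_r` is the unique such family of nonnegative integers. -/
theorem end_colours_determined (n : ℕ) [NeZero n] (hn : 2 ≤ n) (l : ℕ)
    (v : Fin l → ℕ) (hv : SortedV n l v) (lam : Fin l → ℕ → ℕ) (p : ℕ → ZMod n → ℤ)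
    (hHL : IsHL n v lam p) (k : ℕ) (hk : 1 ≤ k) :
    ((fun i => (p k i - p (k - 1) i) - (p (k + 1) (i + 1) - p k (i + 1))) =
        fun i => ∑ r : ZMod n, (psiCount n v lam k r : ℤ) * alphaP n r i) ∧
    (∃ r : ZMod n, psiCount n v lam k r = 0) ∧
    (∀ g : ZMod n → ℕ, (∃ r, g r = 0) →
      ((fun i => (p k i - p (k - 1) i) - (p (k + 1) (i + 1) - p k (i + 1))) =
        fun i => ∑ r : ZMod n, (g r : ℤ) * alphaP n r i) →
      g = fun r => psiCount n v lam k r) := by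
  have hMP : IsMP l lam := hHL.1
  have hPi : IsPi n v lam p := hHL.2.2.1
  have h1 : (fun i => (p k i - p (k - 1) i) - (p (k + 1) (i + 1) - p k (i + 1))) =
      fun i => ∑ r : ZMod n, (psiCount n v lam k r : ℤ) * alphaP n r i := by
    funext i
    have e1 := congrFun (hPi.1 (k-1)) i
    have e2 := congrFun (hPi.1 k) (i+1)
    rw [show k - 1 + 1 = k from by omega] at e1
    rw [e1, e2]
    exact partA n v lam hMP k hk i
  refine ⟨h1, partB n hn v hv lam p hHL k hk, ?_⟩
  rintro g ⟨r1, hr1⟩ hg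
  obtain ⟨r0, hr0⟩ := partB n hn v hv lam p hHL k hk
  set d : ZMod n → ℤ := fun r => (g r : ℤ) - (psiCount n v lam k r : ℤ) with hd
  have hsum : ∀ i, ∑ r : ZMod n, d r * alphaP n r i = 0 := by
    intro i
    have a1 := congrFun hg i
    have a2 := congrFun h1 i
    have a3 : ∑ r : ZMod n, (g r : ℤ) * alphaP n r i
        = ∑ r : ZMod n, (psiCount n v lam k r : ℤ) * alphaP n r i := by
      rw [← a1, ← a2]
    have : ∑ r : ZMod n, d r * alphaP n r i
        = ∑ r : ZMod n, (g r : ℤ) * alphaP n r i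
          - ∑ r : ZMod n, (psiCount n v lam k r : ℤ) * alphaP n r i := by
      rw [← Finset.sum_sub_distrib]
      apply Finset.sum_congr rfl
      intro r _
      simp only [hd]
      ring
    rw [this, a3, sub_self]
  have hharm : ∀ i, 2 * d i - d (i + 1) - d (i - 1) = 0 := by
    intro i
    have := hsum i
    rwa [sum_alphaP n d i] at this
  have hconst := harmonic_const n d hharm
  have c1 : d r1 ≤ 0 := by
    simp only [hd, hr1, Nat.cast_zero, zero_sub, neg_nonpos]
    positivity
  have c2 : 0 ≤ d r0 := by
    simp only [hd, hr0, Nat.cast_zero, sub_zero]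
    positivity
  have hzero : d 0 = 0 := by
    have k1 := hconst r1
    have k2 := hconst r0
    omega
  funext r
  have := hconst r
  rw [hzero] at this
  simp only [hd, sub_eq_zero] at this
  exact_mod_cast this

end BF
end

section
/- Let Λ ∈ P_l^+, p ∈ 𝒫(Λ) and λ = λ(p). For k ≥ 1 and r ∈ ℤ/nℤ, let m_r(k) be the number of r-nodes of λ lying in column k or in columns to the right of column k. Then for all k ≥ 1, p_{k−1} − p̄_{k−1} = −∑_{r ∈ ℤ/nℤ} m_r(k)α′_r. -/
open scoped BigOperators

namespace BF

section Helpers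

open scoped Classical

lemma natCard_eq_filterCard {α : Type*} (P : α → Prop) [DecidablePred P] (s : Finset α)
    (h : ∀ x, P x → x ∈ s) : Nat.card {x // P x} = (s.filter P).card := by
  have hs : {x | P x} = ↑(s.filter P) := by
    ext x
    simp only [Finset.coe_filter, Set.mem_setOf_eq]
    exact ⟨fun hx => ⟨h x hx, hx⟩, fun hx => hx.2⟩
  have := Nat.card_coe_set_eq {x | P x}
  rw [Set.coe_setOf] at this
  rw [hs, Set.ncard_coe_finset] at this
  exact this

lemma mem_iff_lt_card {s : Finset ℕ} (hdc : ∀ a b, a ≤ b → b ∈ s → a ∈ s) (i : ℕ) :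
    i ∈ s ↔ i < s.card := by
  constructor
  · intro hi
    have hsub : Finset.range (i + 1) ⊆ s := fun j hj =>
      hdc j i (by simpa using Nat.lt_succ_iff.mp (Finset.mem_range.mp hj)) hi
    have := Finset.card_le_card hsub
    simpa using this
  · intro h
    by_contra hi
    have hsub : s ⊆ Finset.range i := by
      intro j hj
      rw [Finset.mem_range]
      by_contra hij
      exact hi (hdc i j (le_of_not_gt hij) hj)
    have := Finset.card_le_card hsub
    simp at this
    omega

lemma colHt_eq_card (f : ℕ → ℕ) (N : ℕ) (hN : ∀ i, N ≤ i → f i = 0) (m : ℕ) (hm : 1 ≤ m) :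
    colHt f m = ((Finset.range N).filter fun i => m ≤ f i).card := by
  refine natCard_eq_filterCard _ _ ?_
  intro i hi
  rw [Finset.mem_range]
  by_contra h
  have := hN i (le_of_not_gt h)
  omega

lemma colHt_le (f : ℕ → ℕ) (N : ℕ) (hN : ∀ i, N ≤ i → f i = 0) (m : ℕ) (hm : 1 ≤ m) :
    colHt f m ≤ N := by
  rw [colHt_eq_card f N hN m hm]
  calc ((Finset.range N).filter fun i => m ≤ f i).card ≤ (Finset.range N).card :=
        Finset.card_filter_le _ _
    _ = N := Finset.card_range N

lemma lt_colHt_iff (f : ℕ → ℕ) (hd : ∀ i, f (i + 1) ≤ f i) (N : ℕ)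
    (hN : ∀ i, N ≤ i → f i = 0) (m : ℕ) (hm : 1 ≤ m) (i : ℕ) :
    i < colHt f m ↔ m ≤ f i := by
  have hanti : Antitone f := antitone_nat_of_succ_le hd
  rw [colHt_eq_card f N hN m hm]
  rw [← mem_iff_lt_card (s := (Finset.range N).filter fun i => m ≤ f i)
    (fun a b hab hb => by
      simp only [Finset.mem_filter, Finset.mem_range] at *
      exact ⟨lt_of_le_of_lt hab hb.1, le_trans hb.2 (hanti hab)⟩) i]
  simp only [Finset.mem_filter, Finset.mem_range]
  constructor
  · exact fun h => h.2
  · intro h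
    refine ⟨?_, h⟩
    by_contra hiN
    have := hN i (le_of_not_gt hiN)
    omega

lemma alpha_tel (n : ℕ) (a : ZMod n) (h : ℕ) (i : ZMod n) :
    ∑ t ∈ Finset.range h, alphaP n (a - (t : ZMod n)) i
      = (Lam n a i - Lam n (a + 1) i) - (Lam n (a - (h : ZMod n)) i - Lam n (a - (h : ZMod n) + 1) i) := by
  have hsum := Finset.sum_range_sub'
    (fun t : ℕ => Lam n (a - (t : ZMod n)) i - Lam n (a - (t : ZMod n) + 1) i) h
  have hterm : ∀ t : ℕ, alphaP n (a - (t : ZMod n)) i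
      = (Lam n (a - (t : ZMod n)) i - Lam n (a - (t : ZMod n) + 1) i)
        - (Lam n (a - ((t + 1 : ℕ) : ZMod n)) i - Lam n (a - ((t + 1 : ℕ) : ZMod n) + 1) i) := by
    intro t
    have e2 : a - ((t + 1 : ℕ) : ZMod n) + 1 = a - (t : ZMod n) := by push_cast; ring
    have e1 : a - ((t + 1 : ℕ) : ZMod n) = a - (t : ZMod n) - 1 := by push_cast; ring
    rw [e2, e1]
    simp only [alphaP]
    ring
  calc ∑ t ∈ Finset.range h, alphaP n (a - (t : ZMod n)) i
      = ∑ t ∈ Finset.range h,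
          ((Lam n (a - (t : ZMod n)) i - Lam n (a - (t : ZMod n) + 1) i)
            - (Lam n (a - ((t + 1 : ℕ) : ZMod n)) i - Lam n (a - ((t + 1 : ℕ) : ZMod n) + 1) i)) :=
        Finset.sum_congr rfl fun t _ => hterm t
    _ = (Lam n (a - ((0 : ℕ) : ZMod n)) i - Lam n (a - ((0 : ℕ) : ZMod n) + 1) i)
          - (Lam n (a - (h : ZMod n)) i - Lam n (a - (h : ZMod n) + 1) i) := hsum
    _ = _ := by norm_num

lemma perJ (n : ℕ) (w : ZMod n) (m h : ℕ) (i : ZMod n) :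
    ∑ t ∈ Finset.range h, alphaP n (w + (m : ZMod n) - (t : ZMod n)) i =
      ((if w + (m : ZMod n) - (h : ZMod n) = i - 1 then (1 : ℤ) else 0)
          - (if w + (m : ZMod n) - (h : ZMod n) = i then (1 : ℤ) else 0))
        - ((if w = i - ((m + 1 : ℕ) : ZMod n) then (1 : ℤ) else 0)
          - (if w = i - (m : ZMod n) then (1 : ℤ) else 0)) := by
  rw [alpha_tel n (w + (m : ZMod n)) h i]
  have c1 : (w + (m : ZMod n) - (h : ZMod n) = i - 1) = (i = w + (m : ZMod n) - (h : ZMod n) + 1) := by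
    apply propext
    constructor <;> intro hh <;> first | linear_combination hh | linear_combination -hh
  have c2 : (w + (m : ZMod n) - (h : ZMod n) = i) = (i = w + (m : ZMod n) - (h : ZMod n)) :=
    propext eq_comm
  have c3 : (w = i - ((m + 1 : ℕ) : ZMod n)) = (i = w + (m : ZMod n) + 1) := by
    apply propext
    push_cast
    constructor <;> intro hh <;> first | linear_combination hh | linear_combination -hh
  have c4 : (w = i - (m : ZMod n)) = (i = w + (m : ZMod n)) := by
    apply propext
    constructor <;> intro hh <;> first | linear_combination hh | linear_combination -hh
  simp only [c1, c2, c3, c4]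
  simp only [Lam]
  ring

end Helpers

/-- `p_{k-1} - p̄_{k-1} = -∑_r m_r(k) α′_r`. -/
theorem path_vs_ground_state (n : ℕ) [NeZero n] (hn : 2 ≤ n) (l : ℕ)
    (v : Fin l → ℕ) (hv : SortedV n l v) (lam : Fin l → ℕ → ℕ) (p : ℕ → ZMod n → ℤ)
    (hHL : IsHL n v lam p) (k : ℕ) (hk : 1 ≤ k) :
    (fun i => p (k - 1) i - gsp n (wtOf n v) (k - 1) i) =
      fun i => -∑ r : ZMod n, (mCount n v lam k r : ℤ) * alphaP n r i := by
  classical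
  obtain ⟨hMP, hCyl, hPi, hmax⟩ := hHL
  obtain ⟨hstep, K0, hK0⟩ := hPi
  choose N hN using fun j => (hMP j).2
  set B : ℕ := (Finset.univ.sup fun j : Fin l => N j + lam j 0) + 1 with hBdef
  have hsup : ∀ j : Fin l, N j + lam j 0 + 1 ≤ B := fun j => by
    have h := Finset.le_sup (f := fun j : Fin l => N j + lam j 0) (Finset.mem_univ j)
    have h' : N j + lam j 0 ≤ Finset.univ.sup (fun j : Fin l => N j + lam j 0) := h
    rw [hBdef]
    omega
  have hanti : ∀ j, Antitone (lam j) := fun j => antitone_nat_of_succ_le (hMP j).1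
  have hlamB : ∀ j i', lam j i' < B := fun j i' => by
    have h1 := hanti j (Nat.zero_le i')
    have h2 := hsup j
    omega
  have hzero : ∀ j i', B ≤ i' → lam j i' = 0 := fun j i' hi' =>
    hN j i' (by have := hsup j; omega)
  have hht : ∀ (j : Fin l) (m i' : ℕ), i' < colHt (lam j) (m + 1) ↔ m + 1 ≤ lam j i' :=
    fun j m i' =>
      lt_colHt_iff (lam j) (hMP j).1 B (fun i hi => hzero j i hi) (m + 1) (by omega) i'
  have hhtB : ∀ (j : Fin l) (m : ℕ), colHt (lam j) (m + 1) ≤ B := fun j m =>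
    colHt_le (lam j) B (fun i hi => hzero j i hi) (m + 1) (by omega)
  set box : Finset (Fin l × ℕ × ℕ) := Finset.univ ×ˢ Finset.range B ×ˢ Finset.Icc 1 B
    with hboxdef
  have hmc : ∀ k r, 1 ≤ k → mCount n v lam k r
      = (box.filter (fun x : Fin l × ℕ × ℕ =>
          k ≤ x.2.2 ∧ x.2.2 ≤ lam x.1 x.2.1 ∧ colour n v x.1 x.2.1 x.2.2 = r)).card := by
    intro k r hk
    refine natCard_eq_filterCard _ _ ?_
    intro x hx
    obtain ⟨h1, h2, h3⟩ := hx
    have h4 := hlamB x.1 x.2.1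
    have h5 : ¬ B ≤ x.2.1 := fun hge => by
      have := hzero x.1 x.2.1 hge
      omega
    simp only [hboxdef, Finset.mem_product, Finset.mem_univ, Finset.mem_range,
      Finset.mem_Icc, true_and]
    omega
  have hsplit : ∀ m r, (mCount n v lam (m + 1) r : ℤ) - (mCount n v lam (m + 2) r : ℤ)
      = ((box.filter (fun x : Fin l × ℕ × ℕ =>
          x.2.2 = m + 1 ∧ x.2.2 ≤ lam x.1 x.2.1 ∧ colour n v x.1 x.2.1 x.2.2 = r)).card : ℤ) := by
    intro m r
    rw [hmc (m + 1) r (by omega), hmc (m + 2) r (by omega)]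
    have hu : box.filter (fun x : Fin l × ℕ × ℕ =>
          m + 1 ≤ x.2.2 ∧ x.2.2 ≤ lam x.1 x.2.1 ∧ colour n v x.1 x.2.1 x.2.2 = r)
        = (box.filter (fun x : Fin l × ℕ × ℕ =>
            m + 2 ≤ x.2.2 ∧ x.2.2 ≤ lam x.1 x.2.1 ∧ colour n v x.1 x.2.1 x.2.2 = r))
          ∪ (box.filter (fun x : Fin l × ℕ × ℕ =>
            x.2.2 = m + 1 ∧ x.2.2 ≤ lam x.1 x.2.1 ∧ colour n v x.1 x.2.1 x.2.2 = r)) := by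
      rw [← Finset.filter_or]
      apply Finset.filter_congr
      intro x _
      constructor
      · rintro ⟨h1, h2⟩
        by_cases hc : x.2.2 = m + 1
        · exact Or.inr ⟨hc, h2⟩
        · exact Or.inl ⟨by omega, h2⟩
      · rintro (⟨h1, h2⟩ | ⟨h1, h2⟩) <;> exact ⟨by omega, h2⟩
    have hd : Disjoint
        (box.filter (fun x : Fin l × ℕ × ℕ =>
            m + 2 ≤ x.2.2 ∧ x.2.2 ≤ lam x.1 x.2.1 ∧ colour n v x.1 x.2.1 x.2.2 = r))
        (box.filter (fun x : Fin l × ℕ × ℕ =>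
            x.2.2 = m + 1 ∧ x.2.2 ≤ lam x.1 x.2.1 ∧ colour n v x.1 x.2.1 x.2.2 = r)) := by
      rw [Finset.disjoint_left]
      intro x hx hx'
      simp only [Finset.mem_filter] at hx hx'
      omega
    rw [hu, Finset.card_union_of_disjoint hd]
    push_cast
    ring
  have hef : ∀ (m : ℕ) (x : ZMod n), ((eFun n v lam m x : ℤ))
      = ∑ j : Fin l, if (v j : ZMod n) + (m : ZMod n) - (colHt (lam j) (m + 1) : ZMod n) = x
          then (1 : ℤ) else 0 := by
    intro m x
    rw [Finset.sum_boole]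
    have hc := natCard_eq_filterCard
      (fun j : Fin l =>
        (v j : ZMod n) + (m : ZMod n) - (colHt (lam j) (m + 1) : ZMod n) = x)
      Finset.univ (fun j _ => Finset.mem_univ j)
    simp only [eFun]
    exact_mod_cast hc
  have hgsp : ∀ (k : ℕ) (i : ZMod n), gsp n (wtOf n v) k i
      = ∑ j : Fin l, if (v j : ZMod n) = i - (k : ZMod n) then (1 : ℤ) else 0 := by
    intro k i
    rw [Finset.sum_boole]
    simp only [gsp, wtOf]
  have key : ∀ (m : ℕ) (i : ZMod n),
      (∑ r : ZMod n, ((mCount n v lam (m + 1) r : ℤ) - (mCount n v lam (m + 2) r : ℤ))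
          * alphaP n r i)
        = stepWt n (eFun n v lam m) i
          - (gsp n (wtOf n v) (m + 1) i - gsp n (wtOf n v) m i) := by
    intro m i
    have step1 : ∀ r : ZMod n,
        ((mCount n v lam (m + 1) r : ℤ) - (mCount n v lam (m + 2) r : ℤ)) * alphaP n r i
        = ∑ x ∈ box, if (x.2.2 = m + 1 ∧ x.2.2 ≤ lam x.1 x.2.1 ∧
            colour n v x.1 x.2.1 x.2.2 = r) then alphaP n r i else 0 := by
      intro r
      rw [hsplit m r, ← Finset.sum_boole, Finset.sum_mul]
      exact Finset.sum_congr rfl fun x _ => by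
        by_cases h : (x.2.2 = m + 1 ∧ x.2.2 ≤ lam x.1 x.2.1 ∧
            colour n v x.1 x.2.1 x.2.2 = r) <;> simp [h]
    calc ∑ r : ZMod n,
          ((mCount n v lam (m + 1) r : ℤ) - (mCount n v lam (m + 2) r : ℤ)) * alphaP n r i
        = ∑ r : ZMod n, ∑ x ∈ box, if (x.2.2 = m + 1 ∧ x.2.2 ≤ lam x.1 x.2.1 ∧
            colour n v x.1 x.2.1 x.2.2 = r) then alphaP n r i else 0 :=
          Finset.sum_congr rfl fun r _ => step1 r
      _ = ∑ x ∈ box, ∑ r : ZMod n, if (x.2.2 = m + 1 ∧ x.2.2 ≤ lam x.1 x.2.1 ∧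
            colour n v x.1 x.2.1 x.2.2 = r) then alphaP n r i else 0 := Finset.sum_comm
      _ = ∑ x ∈ box, if (x.2.2 = m + 1 ∧ x.2.2 ≤ lam x.1 x.2.1)
            then alphaP n (colour n v x.1 x.2.1 x.2.2) i else 0 := by
          refine Finset.sum_congr rfl fun x _ => ?_
          by_cases hA : x.2.2 = m + 1 ∧ x.2.2 ≤ lam x.1 x.2.1
          · rw [if_pos hA]
            calc (∑ r : ZMod n, if (x.2.2 = m + 1 ∧ x.2.2 ≤ lam x.1 x.2.1 ∧
                  colour n v x.1 x.2.1 x.2.2 = r) then alphaP n r i else 0)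
                = ∑ r : ZMod n, if colour n v x.1 x.2.1 x.2.2 = r then alphaP n r i else 0 :=
                  Finset.sum_congr rfl fun r _ => if_congr (by tauto) rfl rfl
              _ = _ := by
                  rw [Finset.sum_ite_eq Finset.univ (colour n v x.1 x.2.1 x.2.2)
                    (fun r => alphaP n r i)]
                  exact if_pos (Finset.mem_univ _)
          · rw [if_neg hA]
            exact Finset.sum_eq_zero fun r _ => if_neg (by tauto)
      _ = ∑ j : Fin l, ∑ y ∈ Finset.range B ×ˢ Finset.Icc 1 B,
            if (y.2 = m + 1 ∧ y.2 ≤ lam j y.1)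
              then alphaP n (colour n v j y.1 y.2) i else 0 := Finset.sum_product _ _ _
      _ = ∑ j : Fin l, ∑ i' ∈ Finset.range B, ∑ c ∈ Finset.Icc 1 B,
            if (c = m + 1 ∧ c ≤ lam j i') then alphaP n (colour n v j i' c) i else 0 :=
          Finset.sum_congr rfl fun j _ => Finset.sum_product _ _ _
      _ = ∑ j : Fin l, ∑ i' ∈ Finset.range B,
            if m + 1 ≤ lam j i' then alphaP n (colour n v j i' (m + 1)) i else 0 := by
          refine Finset.sum_congr rfl fun j _ => Finset.sum_congr rfl fun i' _ => ?_
          by_cases hc : m + 1 ≤ lam j i'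
          · rw [if_pos hc, Finset.sum_eq_single (m + 1)]
            · exact if_pos ⟨rfl, hc⟩
            · intro c _ hne
              exact if_neg (by rintro ⟨rfl, _⟩; exact hne rfl)
            · intro habs
              exact absurd (Finset.mem_Icc.mpr ⟨by omega, by have := hlamB j i'; omega⟩) habs
          · rw [if_neg hc]
            refine Finset.sum_eq_zero fun c _ => if_neg ?_
            rintro ⟨rfl, hle⟩
            exact hc hle
      _ = ∑ j : Fin l, ∑ t ∈ Finset.range (colHt (lam j) (m + 1)),
            alphaP n ((v j : ZMod n) + (m : ZMod n) - (t : ZMod n)) i := by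
          refine Finset.sum_congr rfl fun j _ => ?_
          have h1 : ∀ i' : ℕ, (m + 1 ≤ lam j i') = (i' < colHt (lam j) (m + 1)) :=
            fun i' => propext (hht j m i').symm
          calc (∑ i' ∈ Finset.range B,
                if m + 1 ≤ lam j i' then alphaP n (colour n v j i' (m + 1)) i else 0)
              = ∑ i' ∈ Finset.range B,
                if i' < colHt (lam j) (m + 1) then alphaP n (colour n v j i' (m + 1)) i else 0 := by
                simp only [h1]
            _ = ∑ i' ∈ (Finset.range B).filter (fun i' => i' < colHt (lam j) (m + 1)),
                alphaP n (colour n v j i' (m + 1)) i := (Finset.sum_filter _ _).symm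
            _ = ∑ i' ∈ Finset.range (colHt (lam j) (m + 1)),
                alphaP n (colour n v j i' (m + 1)) i := by
                have hb := hhtB j m
                congr 1
                ext x
                simp only [Finset.mem_filter, Finset.mem_range]
                omega
            _ = _ := Finset.sum_congr rfl fun t _ => by
                congr 1
                simp only [colour]
                push_cast
                ring
      _ = ∑ j : Fin l,
            (((if (v j : ZMod n) + (m : ZMod n) - (colHt (lam j) (m + 1) : ZMod n) = i - 1
                then (1 : ℤ) else 0)
              - (if (v j : ZMod n) + (m : ZMod n) - (colHt (lam j) (m + 1) : ZMod n) = i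
                then (1 : ℤ) else 0))
            - ((if (v j : ZMod n) = i - ((m + 1 : ℕ) : ZMod n) then (1 : ℤ) else 0)
              - (if (v j : ZMod n) = i - (m : ZMod n) then (1 : ℤ) else 0))) :=
          Finset.sum_congr rfl fun j _ => perJ n (v j) m (colHt (lam j) (m + 1)) i
      _ = stepWt n (eFun n v lam m) i
            - (gsp n (wtOf n v) (m + 1) i - gsp n (wtOf n v) m i) := by
          rw [Finset.sum_sub_distrib, Finset.sum_sub_distrib, Finset.sum_sub_distrib]
          simp only [stepWt]
          rw [hef m (i - 1), hef m i, hgsp (m + 1) i, hgsp m i]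
  have hmczero : ∀ m, B ≤ m → ∀ r, mCount n v lam (m + 1) r = 0 := by
    intro m hm r
    haveI : IsEmpty {x : Fin l × ℕ × ℕ //
        m + 1 ≤ x.2.2 ∧ x.2.2 ≤ lam x.1 x.2.1 ∧ colour n v x.1 x.2.1 x.2.2 = r} := by
      constructor
      rintro ⟨x, h1, h2, h3⟩
      have := hlamB x.1 x.2.1
      omega
    simp only [mCount]
    exact Nat.card_of_isEmpty
  have base : ∀ m, max K0 B ≤ m → ∀ i : ZMod n,
      p m i - gsp n (wtOf n v) m i
        = -∑ r : ZMod n, (mCount n v lam (m + 1) r : ℤ) * alphaP n r i := by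
    intro m hm i
    rw [hK0 m (le_trans (le_max_left _ _) hm)]
    have h2 := hmczero m (le_trans (le_max_right _ _) hm)
    simp [h2]
  have stepQ : ∀ m : ℕ,
      (∀ i : ZMod n, p (m + 1) i - gsp n (wtOf n v) (m + 1) i
        = -∑ r : ZMod n, (mCount n v lam (m + 1 + 1) r : ℤ) * alphaP n r i) →
      ∀ i : ZMod n, p m i - gsp n (wtOf n v) m i
        = -∑ r : ZMod n, (mCount n v lam (m + 1) r : ℤ) * alphaP n r i := by
    intro m ih i
    have h1 : p (m + 1) i - p m i = stepWt n (eFun n v lam m) i := congrFun (hstep m) i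
    have h2 := ih i
    have e : m + 1 + 1 = m + 2 := rfl
    rw [e] at h2
    have h3 := key m i
    have h4 : ∑ r : ZMod n,
        ((mCount n v lam (m + 1) r : ℤ) - (mCount n v lam (m + 2) r : ℤ)) * alphaP n r i
        = (∑ r : ZMod n, (mCount n v lam (m + 1) r : ℤ) * alphaP n r i)
          - ∑ r : ZMod n, (mCount n v lam (m + 2) r : ℤ) * alphaP n r i := by
      rw [← Finset.sum_sub_distrib]
      exact Finset.sum_congr rfl fun r _ => sub_mul _ _ _
    rw [h4] at h3
    linear_combination h2 - h1 + h3
  have main : ∀ t m : ℕ, max K0 B ≤ m + t → ∀ i : ZMod n,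
      p m i - gsp n (wtOf n v) m i
        = -∑ r : ZMod n, (mCount n v lam (m + 1) r : ℤ) * alphaP n r i := by
    intro t
    induction t with
    | zero => intro m hm; exact base m (by omega)
    | succ t ihw =>
      intro m hm
      by_cases hKm : max K0 B ≤ m
      · exact base m hKm
      · exact stepQ m (ihw (m + 1) (by omega))
  funext i
  have hres := main (max K0 B) (k - 1) (by omega) i
  have e : k - 1 + 1 = k := by omega
  rw [e] at hres
  exact hres


end BF
end

section
/- Let Λ′ ∈ P^+_{l′} and Λ″ ∈ P^+_{l″}. The map p ↦ ♯p restricts to a bijection from 𝒫(Λ′,Λ″) onto 𝒫(♯Λ″,♯Λ′), and moreover ℓ(♯p) = ℓ(p) for every p ∈ 𝒫(Λ′,Λ″). -/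
open scoped BigOperators

namespace BF

section Aux

variable (n : ℕ) [NeZero n]

lemma sum_stepWt (e : ZMod n → ℕ) : ∑ i, stepWt n e i = 0 := by
  unfold stepWt
  rw [Finset.sum_sub_distrib]
  have h : ∑ i : ZMod n, (e (i - 1) : ℤ) = ∑ i : ZMod n, (e i : ℤ) :=
    Fintype.sum_equiv (Equiv.subRight (1 : ZMod n)) _ _ (fun i => rfl)
  rw [h, sub_self]

lemma sum_sharpWt (L : ZMod n → ℤ) : ∑ i, sharpWt n L i = ∑ i, L i :=
  Fintype.sum_equiv (Equiv.neg (ZMod n)) _ _ (fun i => rfl)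

lemma sharpWt_invol (L : ZMod n → ℤ) : sharpWt n (sharpWt n L) = L := by
  funext i; simp [sharpWt]

lemma sharpPath_invol (p : ℕ → ZMod n → ℤ) : sharpPath n (sharpPath n p) = p := by
  funext k i; simp [sharpPath, sub_sub_cancel]

lemma sum_of_isRes {l' l'' : ℕ} {L' L'' : ZMod n → ℤ}
    (hl' : (∑ i, L' i) = (l' : ℤ)) (hl'' : (∑ i, L'' i) = (l'' : ℤ))
    {p : ℕ → ZMod n → ℤ}
    (hp : IsRes n l'' L' L'' p) : ∀ k, ∑ i, p k i = (l' : ℤ) + (l'' : ℤ) := by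
  have hstep : ∀ k, ∑ i, p (k + 1) i = ∑ i, p k i := by
    intro k
    obtain ⟨e, -, he, -⟩ := hp.2 k
    have h1 : ∀ i, p (k + 1) i = p k i + stepWt n e i := by
      intro i
      have := congrFun he i
      linarith
    calc ∑ i, p (k + 1) i = ∑ i, (p k i + stepWt n e i) :=
          Finset.sum_congr rfl fun i _ => h1 i
      _ = (∑ i, p k i) + ∑ i, stepWt n e i := Finset.sum_add_distrib
      _ = ∑ i, p k i := by rw [sum_stepWt]; ring
  have hconst : ∀ k, ∑ i, p k i = ∑ i, p 0 i := by
    intro k; induction k with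
    | zero => rfl
    | succ m ih => rw [hstep m]; exact ih
  obtain ⟨K, hK⟩ := hp.1.2
  have hKv : ∑ i, p K i = (l' : ℤ) + (l'' : ℤ) := by
    have h2 : ∀ i, p K i = L' i + L'' (i - (K : ZMod n)) := by
      intro i
      have := congrFun (hK K le_rfl) i
      simp only [gsp] at this
      linarith
    have h3 : ∑ i : ZMod n, L'' (i - (K : ZMod n)) = ∑ i, L'' i :=
      Fintype.sum_equiv (Equiv.subRight ((K : ℕ) : ZMod n)) _ _ (fun i => rfl)
    calc ∑ i, p K i = ∑ i, (L' i + L'' (i - (K : ZMod n))) :=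
          Finset.sum_congr rfl fun i _ => h2 i
      _ = (∑ i, L' i) + ∑ i : ZMod n, L'' (i - (K : ZMod n)) := Finset.sum_add_distrib
      _ = (l' : ℤ) + (l'' : ℤ) := by rw [hl', h3, hl'']
  intro k
  rw [hconst k, ← hconst K, hKv]

/-- The pointwise characterization of being at ground state, transported by `♯`. -/
lemma gsp_iff {L' L'' : ZMod n → ℤ} (p : ℕ → ZMod n → ℤ) (k : ℕ) :
    ((fun i => sharpPath n p k i - sharpWt n L'' i) = gsp n (sharpWt n L') k) ↔
      ((fun i => p k i - L' i) = gsp n L'' k) := by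
  constructor
  · intro H
    funext i
    have := congrFun H ((k : ZMod n) - i)
    simp only [sharpPath, sharpWt, gsp, sub_sub_cancel, sub_sub_cancel_left, neg_sub, neg_neg] at this ⊢
    linarith
  · intro G
    funext i
    have := congrFun G ((k : ZMod n) - i)
    simp only [sharpPath, sharpWt, gsp, sub_sub_cancel, sub_sub_cancel_left, neg_sub, neg_neg] at this ⊢
    linarith

/-- The key step data for `♯p`. -/
lemma forward_isRes {l' l'' : ℕ} {L' L'' : ZMod n → ℤ}
    (hl' : (∑ i, L' i) = (l' : ℤ)) (hl'' : (∑ i, L'' i) = (l'' : ℤ))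
    {p : ℕ → ZMod n → ℤ} (hp : IsRes n l'' L' L'' p) :
    IsRes n l' (sharpWt n L'') (sharpWt n L') (sharpPath n p) := by
  have hsum := sum_of_isRes n hl' hl'' hp
  have key : ∀ k, ∃ e' : ZMod n → ℕ, (∑ i, e' i) = l' ∧
      (fun i => sharpPath n p (k + 1) i - sharpPath n p k i) = stepWt n e' ∧
      ∀ i, (e' i : ℤ) ≤ sharpPath n p k i := by
    intro k
    obtain ⟨e, hesum, hestep, hele⟩ := hp.2 k
    refine ⟨fun i => (p k ((k : ZMod n) - i) - (e ((k : ZMod n) - i) : ℤ)).toNat, ?_, ?_, ?_⟩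
    · have c1 : ∀ i : ZMod n,
          ((p k ((k : ZMod n) - i) - (e ((k : ZMod n) - i) : ℤ)).toNat : ℤ)
            = p k ((k : ZMod n) - i) - (e ((k : ZMod n) - i) : ℤ) := by
        intro i
        exact Int.toNat_of_nonneg (by have := hele ((k : ZMod n) - i); linarith)
      have c2 : (∑ i : ZMod n,
          ((p k ((k : ZMod n) - i) - (e ((k : ZMod n) - i) : ℤ)).toNat : ℤ)) = (l' : ℤ) := by
        calc (∑ i : ZMod n,
              ((p k ((k : ZMod n) - i) - (e ((k : ZMod n) - i) : ℤ)).toNat : ℤ))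
            = ∑ i : ZMod n, (p k ((k : ZMod n) - i) - (e ((k : ZMod n) - i) : ℤ)) :=
              Finset.sum_congr rfl fun i _ => c1 i
          _ = ∑ j : ZMod n, (p k j - (e j : ℤ)) :=
              Fintype.sum_equiv (Equiv.subLeft ((k : ℕ) : ZMod n)) _ _ (fun i => rfl)
          _ = (∑ j, p k j) - ∑ j : ZMod n, (e j : ℤ) := Finset.sum_sub_distrib _ _
          _ = (l' : ℤ) := by
              rw [hsum k]
              have : (∑ j : ZMod n, (e j : ℤ)) = (l'' : ℤ) := by
                rw [← Nat.cast_sum, hesum]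
              rw [this]; ring
      exact_mod_cast c2
    · funext i
      have h1 := congrFun hestep ((k : ZMod n) + 1 - i)
      simp only [stepWt] at h1 ⊢
      have c1 : ∀ j : ZMod n,
          ((p k j - (e j : ℤ)).toNat : ℤ) = p k j - (e j : ℤ) := by
        intro j
        exact Int.toNat_of_nonneg (by have := hele j; linarith)
      rw [c1, c1]
      have e1 : (k : ZMod n) - (i - 1) = (k : ZMod n) + 1 - i := by ring
      have e2 : (k : ZMod n) + 1 - i - 1 = (k : ZMod n) - i := by ring
      have e3 : (((k + 1 : ℕ) : ZMod n)) = (k : ZMod n) + 1 := by push_cast; ring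
      simp only [sharpPath, e1, e3]
      rw [e2] at h1
      linarith
    · intro i
      simp only [sharpPath]
      have := Int.toNat_of_nonneg
        (show (0 : ℤ) ≤ p k ((k : ZMod n) - i) - (e ((k : ZMod n) - i) : ℤ) by
          have := hele ((k : ZMod n) - i); linarith)
      rw [this]
      have : (0 : ℤ) ≤ (e ((k : ZMod n) - i) : ℤ) := Int.natCast_nonneg _
      linarith
  constructor
  · constructor
    · intro k
      obtain ⟨e', h1, h2, -⟩ := key k
      exact ⟨e', h1, by funext i; simpa using congrFun h2 i⟩
    · obtain ⟨K, hK⟩ := hp.1.2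
      exact ⟨K, fun k hk => (gsp_iff n p k).mpr (hK k hk)⟩
  · exact key

end Aux
/-- `p ↦ ♯p` is a bijection from `𝒫(Λ′,Λ″)` onto `𝒫(♯Λ″,♯Λ′)`
preserving the length. -/
theorem sharp_bijection (n : ℕ) [NeZero n] (hn : 2 ≤ n) (l' l'' : ℕ)
    (L' L'' : ZMod n → ℤ)
    (hd' : Dominant n L') (hl' : (∑ i, L' i) = (l' : ℤ))
    (hd'' : Dominant n L'') (hl'' : (∑ i, L'' i) = (l'' : ℤ)) :
    Set.BijOn (sharpPath n) {p | IsRes n l'' L' L'' p}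
      {q | IsRes n l' (sharpWt n L'') (sharpWt n L') q} ∧
    ∀ p : ℕ → ZMod n → ℤ, IsRes n l'' L' L'' p →
      resLen n (sharpWt n L'') (sharpWt n L') (sharpPath n p) = resLen n L' L'' p := by
  constructor
  · refine ⟨fun p hp => forward_isRes n hl' hl'' hp, ?_, ?_⟩
    · intro p _ q _ h
      have := congrArg (sharpPath n) h
      rwa [sharpPath_invol, sharpPath_invol] at this
    · intro q hq
      refine ⟨sharpPath n q, ?_, sharpPath_invol n q⟩
      have h1 : (∑ i, sharpWt n L'' i) = (l'' : ℤ) := by rw [sum_sharpWt, hl'']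
      have h2 : (∑ i, sharpWt n L' i) = (l' : ℤ) := by rw [sum_sharpWt, hl']
      have := forward_isRes n h1 h2 hq
      rwa [sharpWt_invol, sharpWt_invol] at this
  · intro p _
    unfold resLen
    congr 1
    ext K
    simp only [Set.mem_setOf_eq]
    exact ⟨fun h k hk => (gsp_iff n p k).mp (h k hk),
      fun h k hk => (gsp_iff n p k).mpr (h k hk)⟩

end BF
end
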